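/- Let f be a positive continuous function on S^n and let h_K, h_L be positive C² functions on S^n satisfying ∇²h + h·Id > 0 and h · det(∇²h + h·Id) = f. Suppose that for every λ ∈ [0,1] the geometric-mean interpolation h_λ := h_K^{1−λ} h_L^{λ} also satisfies ∇²h_λ + h_λ·Id > 0 and h_λ · det(∇²h_λ + h_λ·Id) = f. Then h_K = h_L. -/

import Mathlib

open MeasureTheory Metric Filter Set
open scoped ENNReal NNReal Topology RealInnerProductSpace

noncomputable section

abbrev Eu (n : ℕ) : Type := EuclideanSpace ℝ (Fin (n+1))

def Sph (n : ℕ) : Set (Eu n) := Metric.sphere (0 : Eu n) 1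

/-- spherical Lebesgue measure on `Sⁿ ⊆ ℝⁿ⁺¹`: the n-dimensional Hausdorff measure
restricted to the unit sphere. -/
def sMeas (n : ℕ) : Measure (Eu n) := (μH[(n : ℝ)]).restrict (Sph n)

/-- integral over the sphere with respect to the spherical Lebesgue measure -/
def sInt (n : ℕ) (g : Eu n → ℝ) : ℝ := ∫ x, g x ∂(sMeas n)

def homog1 (n : ℕ) (h : Eu n → ℝ) : Prop := ∀ t : ℝ, 0 < t → ∀ x, h (t • x) = t * h x
def homog0 (n : ℕ) (u : Eu n → ℝ) : Prop := ∀ t : ℝ, 0 < t → ∀ x, u (t • x) = u x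
def evenFn (n : ℕ) (u : Eu n → ℝ) : Prop := ∀ x, u (-x) = u x

/-- second (Euclidean) derivative of h at x in directions v, w -/
def D2 (n : ℕ) (h : Eu n → ℝ) (x v w : Eu n) : ℝ :=
  fderiv ℝ (fun y => fderiv ℝ h y w) x v

/-- For a 1-homogeneous `h`, the matrix of `∇²h + h·Id` (on the tangent space of the sphere),
extended to the full (n+1)×(n+1) matrix by the rank-one block `x ⊗ x` in the radial
direction (for 1-homogeneous `h` the Euclidean Hessian annihilates the radial direction,
and at `x ∈ Sⁿ` the Euclidean Hessian restricted to `x^⊥` equals `∇²h + h·Id`). -/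
def Hmat (n : ℕ) (h : Eu n → ℝ) (x : Eu n) : Matrix (Fin (n+1)) (Fin (n+1)) ℝ :=
  fun i j => D2 n h x (EuclideanSpace.single i 1) (EuclideanSpace.single j 1) + x i * x j

/-- det(∇²h + h Id) -/
def detH (n : ℕ) (h : Eu n → ℝ) (x : Eu n) : ℝ := (Hmat n h x).det

/-- components of the (Euclidean) gradient; for 0-homogeneous `u` and `x ∈ Sⁿ` this is the
spherical gradient of `u|_{Sⁿ}`. -/
def gradv (n : ℕ) (u : Eu n → ℝ) (x : Eu n) : Fin (n+1) → ℝ :=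
  fun i => fderiv ℝ u x (EuclideanSpace.single i 1)

/-- `H^{ij} u_i u_j` -/
def HinvQuad (n : ℕ) (h u : Eu n → ℝ) (x : Eu n) : ℝ :=
  dotProduct (gradv n u x) ((Hmat n h x)⁻¹.mulVec (gradv n u x))

/-- `U^{ij} u_i u_j` where `U` is the cofactor matrix of `∇²h + h Id` -/
def cofQuad (n : ℕ) (h u : Eu n → ℝ) (x : Eu n) : ℝ :=
  dotProduct (gradv n u x) ((Matrix.adjugate (Hmat n h x)).mulVec (gradv n u x))

/-- the class 𝒦ᵏ₊,ₑ, described via support functions: `h` is the (1-homogeneous extension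
of the) support function of an origin-symmetric convex body whose support function is Cᵏ on
the sphere with ∇²h + h·Id > 0. -/
def IsK (n : ℕ) (k : ℕ∞) (h : Eu n → ℝ) : Prop :=
  homog1 n h ∧ evenFn n h ∧ ConvexOn ℝ Set.univ h ∧ (∀ x ∈ Sph n, 0 < h x) ∧
    ContDiffOn ℝ k h {0}ᶜ ∧ (∀ x ∈ Sph n, (Hmat n h x).PosDef)

/-- even C² test functions on the sphere (0-homogeneously extended) -/
def IsTest (n : ℕ) (u : Eu n → ℝ) : Prop :=
  homog0 n u ∧ evenFn n u ∧ ContDiffOn ℝ 2 u {0}ᶜ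

/-- the mean `ū` of `u` with respect to the measure `h det(H) dS` -/
def ubar (n : ℕ) (h u : Eu n → ℝ) : ℝ :=
  (sInt n fun x => h x * detH n h x)⁻¹ * sInt n (fun x => u x * h x * detH n h x)

/-- first even eigenvalue `λ_{1,e}(-L_K)` of the Hilbert–Brunn–Minkowski operator -/
def lam1e (n : ℕ) (h : Eu n → ℝ) : ℝ :=
  ⨅ u : {u : Eu n → ℝ // IsTest n u ∧ ∃ x ∈ Sph n, u x ≠ ubar n h u},
    (sInt n fun x => (h x)^2 * HinvQuad n h u.1 x * detH n h x) /
      (sInt n fun x => (u.1 x - ubar n h u.1)^2 * h x * detH n h x)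

/-- `p₀`, defined by `inf_{K ∈ 𝒦²₊,ₑ} λ_{1,e}(-L_K) = n+1-p₀` -/
def p0 (n : ℕ) : ℝ := (n + 1) - ⨅ h : {h : Eu n → ℝ // IsK n 2 h}, lam1e n h.1

/-- a positive C² solution on the sphere of `h · det(∇²h + h Id) = f`, encoded via the
1-homogeneous extension of a function on `Sⁿ` -/
def IsLogSol (n : ℕ) (f h : Eu n → ℝ) : Prop :=
  homog1 n h ∧ (∀ x ∈ Sph n, 0 < h x) ∧ ContDiffOn ℝ 2 h {0}ᶜ ∧
    (∀ x ∈ Sph n, (Hmat n h x).PosDef) ∧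
    (∀ x ∈ Sph n, h x * detH n h x = f x)

open Polynomial in
lemma aux_exp_poly_const (p : Polynomial ℝ) (t K : ℝ) (hKpos : 0 < K)
    (h : ∀ lam ∈ Set.Icc (0:ℝ) 1, Real.exp (t * lam) * p.eval lam = K) : t = 0 := by
  by_contra ht
  have hroot : ∀ lam ∈ Set.Ioo (0:ℝ) 1, (C t * p + derivative p).eval lam = 0 := by
    intro lam hlam
    have hmem : Set.Ioo (0:ℝ) 1 ∈ 𝓝 lam := isOpen_Ioo.mem_nhds hlam
    have hev : (fun u : ℝ => Real.exp (t*u) * p.eval u) =ᶠ[𝓝 lam] (fun _ => K) :=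
      Filter.eventuallyEq_of_mem hmem (fun u hu => h u (Set.Ioo_subset_Icc_self hu))
    have h1 : HasDerivAt (fun u : ℝ => Real.exp (t*u)) (Real.exp (t*lam) * t) lam := by
      simpa [mul_comm] using ((hasDerivAt_id lam).const_mul t).exp
    have hd : HasDerivAt (fun u : ℝ => Real.exp (t*u) * p.eval u)
        (Real.exp (t*lam) * ((C t * p + derivative p).eval lam)) lam := by
      have h2 := h1.mul (p.hasDerivAt lam)
      refine h2.congr_deriv ?_
      simp only [eval_add, eval_mul, eval_C]
      ring
    have h0 : deriv (fun u : ℝ => Real.exp (t*u) * p.eval u) lam = 0 := by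
      rw [hev.deriv_eq]; simp
    have hzz := hd.deriv
    rw [h0] at hzz
    rcases mul_eq_zero.1 hzz.symm with h' | h'
    · exact absurd h' (Real.exp_ne_zero _)
    · exact h'
  have hq0 : C t * p + derivative p = 0 :=
    Polynomial.eq_zero_of_infinite_isRoot _
      ((Set.Ioo_infinite (by norm_num : (0:ℝ) < 1)).mono (fun lam hlam => hroot lam hlam))
  have hp0 : p ≠ 0 := by
    intro hp
    have h00 := h 0 ⟨le_rfl, zero_le_one⟩
    rw [hp] at h00
    simp at h00
    exact hKpos.ne' h00.symm
  have hder : derivative p = -(C t * p) := by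
    have := hq0
    linear_combination this
  by_cases hd0 : p.natDegree = 0
  · obtain ⟨aa, ha⟩ := Polynomial.natDegree_eq_zero.mp hd0
    have hda : derivative p = 0 := by rw [← ha]; simp
    rw [hda] at hder
    have hct : C t * p = 0 := by linear_combination hq0 - hda
    rcases mul_eq_zero.mp hct with h' | h'
    · exact ht (by simpa using h')
    · exact hp0 h'
  · have h1 : (derivative p).natDegree < p.natDegree := Polynomial.natDegree_derivative_lt hd0
    rw [hder, natDegree_neg, Polynomial.natDegree_C_mul ht] at h1
    exact lt_irrefl _ h1


lemma aux_det_conj (m : ℕ) (v : Fin (m+1) → ℝ) (hv : ∑ i, v i * v i = 1)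
    (M : Matrix (Fin (m+1)) (Fin (m+1)) ℝ)
    (h1 : ∀ j, ∑ i, v i * M i j = 0) (h2 : ∀ i, ∑ j, M i j * v j = 0)
    {s : ℝ} (hs : 0 < s) :
    (s • M + Matrix.of (fun i j => v i * v j)).det
      = s ^ m * (M + Matrix.of (fun i j => v i * v j)).det := by
  set R : Matrix (Fin (m+1)) (Fin (m+1)) ℝ := Matrix.of (fun i j => v i * v j) with hR
  have hRR : R * R = R := by
    ext i j
    simp only [Matrix.mul_apply, hR, Matrix.of_apply]
    calc ∑ k, v i * v k * (v k * v j) = (v i * v j) * ∑ k, v k * v k := by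
          rw [Finset.mul_sum]; exact Finset.sum_congr rfl fun k _ => by ring
      _ = v i * v j := by rw [hv, mul_one]
  have hRM : R * M = 0 := by
    ext i j
    simp only [Matrix.mul_apply, hR, Matrix.of_apply, Matrix.zero_apply]
    calc ∑ k, v i * v k * M k j = v i * ∑ k, v k * M k j := by
          rw [Finset.mul_sum]; exact Finset.sum_congr rfl fun k _ => by ring
      _ = 0 := by rw [h1 j, mul_zero]
  have hMR : M * R = 0 := by
    ext i j
    simp only [Matrix.mul_apply, hR, Matrix.of_apply, Matrix.zero_apply]
    calc ∑ k, M i k * (v k * v j) = (∑ k, M i k * v k) * v j := by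
          rw [Finset.sum_mul]; exact Finset.sum_congr rfl fun k _ => by ring
      _ = 0 := by rw [h2 i, zero_mul]
  set r := Real.sqrt s with hrdef
  have hr : 0 < r := Real.sqrt_pos.2 hs
  have hr2 : r * r = s := Real.mul_self_sqrt hs.le
  set D : Matrix (Fin (m+1)) (Fin (m+1)) ℝ := r • 1 + (1 - r) • R with hD
  have e1 : D * (M + R) = r • M + R := by
    rw [hD, Matrix.add_mul, Matrix.smul_mul, Matrix.smul_mul, Matrix.one_mul,
      Matrix.mul_add, hRM, hRR, smul_add, zero_add]
    module
  have key : D * (M + R) * D = s • M + R := by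
    rw [e1, hD, Matrix.mul_add, Matrix.mul_smul, Matrix.mul_smul, Matrix.mul_one,
      Matrix.add_mul, Matrix.smul_mul, hMR, smul_zero, zero_add, hRR, smul_add,
      smul_smul, hr2]
    module
  have hc : r • ((1 : Matrix (Fin (m+1)) (Fin (m+1)) ℝ)
      + Matrix.replicateCol Unit (fun i => ((1 - r)/r) * v i) * Matrix.replicateRow Unit v) = D := by
    rw [smul_add, hD]
    congr 1
    ext i j
    simp only [Matrix.smul_apply, Matrix.mul_apply, Matrix.replicateCol_apply, Matrix.replicateRow_apply,
      Finset.univ_unique, Finset.sum_singleton, Matrix.of_apply, smul_eq_mul, hR]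
    field_simp
  have hdot : dotProduct v (fun i => ((1 - r)/r) * v i) = (1 - r)/r := by
    simp only [dotProduct]
    calc ∑ i, v i * (((1 - r)/r) * v i) = ((1-r)/r) * ∑ i, v i * v i := by
          rw [Finset.mul_sum]; exact Finset.sum_congr rfl fun k _ => by ring
      _ = (1-r)/r := by rw [hv, mul_one]
  have hdetD : D.det = r ^ m := by
    rw [← hc, Matrix.det_smul, Matrix.det_one_add_replicateCol_mul_replicateRow, hdot, Fintype.card_fin]
    have h1r : (1 : ℝ) + (1 - r)/r = 1/r := by field_simp; ring
    rw [h1r, pow_succ]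
    field_simp
  calc (s • M + R).det = (D * (M + R) * D).det := by rw [key]
    _ = D.det * (M + R).det * D.det := by rw [Matrix.det_mul, Matrix.det_mul]
    _ = s ^ m * (M + R).det := by rw [hdetD, ← hr2, mul_pow]; ring


lemma aux_pos (n : ℕ) (h : Eu n → ℝ) (hh : homog1 n h) (hp : ∀ x ∈ Sph n, 0 < h x) :
    ∀ y : Eu n, y ≠ 0 → 0 < h y := by
  intro y hy
  have hny : 0 < ‖y‖ := norm_pos_iff.2 hy
  have hu : (‖y‖⁻¹ • y) ∈ Sph n := by
    simp only [Sph, mem_sphere_zero_iff_norm, norm_smul, norm_inv, norm_norm]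
    exact inv_mul_cancel₀ hny.ne'
  have hyy := hh ‖y‖ hny (‖y‖⁻¹ • y)
  rw [smul_inv_smul₀ hny.ne'] at hyy
  rw [hyy]
  exact mul_pos hny (hp _ hu)

set_option maxHeartbeats 1000000 in
lemma aux_hess (n : ℕ) (hK hL : Eu n → ℝ)
    (hKh : homog1 n hK) (hLh : homog1 n hL)
    (hKc : ContDiffOn ℝ 2 hK {0}ᶜ) (hLc : ContDiffOn ℝ 2 hL {0}ᶜ)
    (hKpos : ∀ y : Eu n, y ≠ 0 → 0 < hK y) (hLpos : ∀ y : Eu n, y ≠ 0 → 0 < hL y)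
    (x : Eu n) (hx : x ≠ 0) (lam : ℝ) :
    (∀ v w : Eu n,
      fderiv ℝ (fun y => fderiv ℝ (fun z => hK z ^ (1 - lam) * hL z ^ lam) y w) x v
        = (hK x ^ (1 - lam) * hL x ^ lam) *
          (((1 - lam) * (fderiv ℝ (fderiv ℝ (fun z => Real.log (hK z))) x v) w
             + lam * (fderiv ℝ (fderiv ℝ (fun z => Real.log (hL z))) x v) w)
           + ((1 - lam) * fderiv ℝ (fun z => Real.log (hK z)) x v
               + lam * fderiv ℝ (fun z => Real.log (hL z)) x v)
             * ((1 - lam) * fderiv ℝ (fun z => Real.log (hK z)) x w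
               + lam * fderiv ℝ (fun z => Real.log (hL z)) x w)))
    ∧ (∀ v w : Eu n,
      fderiv ℝ (fun y => fderiv ℝ (fun z => hK z ^ (1 - lam) * hL z ^ lam) y w) x v
        = fderiv ℝ (fun y => fderiv ℝ (fun z => hK z ^ (1 - lam) * hL z ^ lam) y v) x w)
    ∧ (∀ w : Eu n,
      fderiv ℝ (fun y => fderiv ℝ (fun z => hK z ^ (1 - lam) * hL z ^ lam) y w) x x = 0) := by
  have hU : IsOpen ({0}ᶜ : Set (Eu n)) := isOpen_compl_singleton
  have hxU : x ∈ ({0}ᶜ : Set (Eu n)) := hx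
  set g : Eu n → ℝ := fun z => hK z ^ (1 - lam) * hL z ^ lam with hgdef
  set φK : Eu n → ℝ := fun z => Real.log (hK z) with hphiK
  set φL : Eu n → ℝ := fun z => Real.log (hL z) with hphiL
  have hφKat : ∀ y : Eu n, y ≠ 0 → ContDiffAt ℝ 2 φK y := fun y hy =>
    (hKc.contDiffAt (hU.mem_nhds hy)).log (hKpos y hy).ne'
  have hφLat : ∀ y : Eu n, y ≠ 0 → ContDiffAt ℝ 2 φL y := fun y hy =>
    (hLc.contDiffAt (hU.mem_nhds hy)).log (hLpos y hy).ne'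
  set FK : Eu n → (Eu n →L[ℝ] ℝ) := fderiv ℝ φK with hFK
  set FL : Eu n → (Eu n →L[ℝ] ℝ) := fderiv ℝ φL with hFL
  have hgexp : ∀ y : Eu n, y ≠ 0 → g y = Real.exp ((1 - lam) * φK y + lam * φL y) := by
    intro y hy
    simp only [hgdef, hphiK, hphiL]
    rw [Real.rpow_def_of_pos (hKpos y hy), Real.rpow_def_of_pos (hLpos y hy), ← Real.exp_add]
    ring_nf
  set Gf : Eu n → (Eu n →L[ℝ] ℝ) := fun y =>
    Real.exp ((1 - lam) * φK y + lam * φL y) • ((1 - lam) • FK y + lam • FL y) with hGf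
  have hgd : ∀ y : Eu n, y ≠ 0 → HasFDerivAt g (Gf y) y := by
    intro y hy
    have h1 : HasFDerivAt φK (FK y) y :=
      ((hφKat y hy).differentiableAt two_ne_zero).hasFDerivAt
    have h2 : HasFDerivAt φL (FL y) y :=
      ((hφLat y hy).differentiableAt two_ne_zero).hasFDerivAt
    have hc : HasFDerivAt (fun z => (1 - lam) * φK z + lam * φL z)
        ((1 - lam) • FK y + lam • FL y) y := (h1.const_mul (1 - lam)).add (h2.const_mul lam)
    exact hc.exp.congr_of_eventuallyEq
      (Filter.eventuallyEq_of_mem (hU.mem_nhds hy) (fun z hz => hgexp z hz))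
  have hFKd : HasFDerivAt FK (fderiv ℝ FK x) x := by
    have hcd := (hφKat x hx).fderiv_right (m := 1) (le_refl _)
    exact (hcd.differentiableAt one_ne_zero).hasFDerivAt
  have hFLd : HasFDerivAt FL (fderiv ℝ FL x) x := by
    have hcd := (hφLat x hx).fderiv_right (m := 1) (le_refl _)
    exact (hcd.differentiableAt one_ne_zero).hasFDerivAt
  set FK' := fderiv ℝ FK x with hFK'
  set FL' := fderiv ℝ FL x with hFL'
  set s := Real.exp ((1 - lam) * φK x + lam * φL x) with hsdef
  set Fx : Eu n →L[ℝ] ℝ := (1 - lam) • FK x + lam • FL x with hFx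
  set G' : Eu n →L[ℝ] Eu n →L[ℝ] ℝ :=
    s • ((1 - lam) • FK' + lam • FL') + (s • Fx).smulRight Fx with hG'
  have hGd : HasFDerivAt Gf G' x := by
    have hcomb : HasFDerivAt (fun y => (1 - lam) • FK y + lam • FL y)
        ((1 - lam) • FK' + lam • FL') x := (hFKd.const_smul (1 - lam)).add (hFLd.const_smul lam)
    have h1 : HasFDerivAt φK (FK x) x := ((hφKat x hx).differentiableAt two_ne_zero).hasFDerivAt
    have h2 : HasFDerivAt φL (FL x) x := ((hφLat x hx).differentiableAt two_ne_zero).hasFDerivAt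
    have hφ : HasFDerivAt (fun z => (1 - lam) * φK z + lam * φL z) Fx x :=
      (h1.const_mul (1 - lam)).add (h2.const_mul lam)
    have hexp : HasFDerivAt (fun y => Real.exp ((1 - lam) * φK y + lam * φL y)) (s • Fx) x :=
      hφ.exp
    exact hexp.smul hcomb
  have hevg : ∀ᶠ y in 𝓝 x, HasFDerivAt g (Gf y) y :=
    Filter.eventually_of_mem (hU.mem_nhds hxU) (fun y hy => hgd y hy)
  have hkey : ∀ w : Eu n, HasFDerivAt (fun y => fderiv ℝ g y w) (G'.flip w) x := by
    intro w
    have h1 : HasFDerivAt (fun y => Gf y w) (G'.flip w) x := by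
      have h2 := hGd.clm_apply (hasFDerivAt_const w x)
      simpa using h2
    apply h1.congr_of_eventuallyEq
    exact Filter.eventuallyEq_of_mem (hU.mem_nhds hxU) (fun y hy => by rw [(hgd y hy).fderiv])
  have hsx : hK x ^ (1 - lam) * hL x ^ lam = s := hgexp x hx
  refine ⟨?_, ?_, ?_⟩
  · intro v w
    rw [(hkey w).fderiv, hsx]
    simp only [hG', ContinuousLinearMap.flip_apply, ContinuousLinearMap.add_apply,
      ContinuousLinearMap.smul_apply, ContinuousLinearMap.smulRight_apply, smul_eq_mul, hFx]
    ring
  · intro v w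
    rw [(hkey w).fderiv, (hkey v).fderiv]
    have hsymm := second_derivative_symmetric_of_eventually hevg hGd v w
    simpa [ContinuousLinearMap.flip_apply] using hsymm
  · intro w
    rw [(hkey w).fderiv]
    have hgt : ∀ t : ℝ, 0 < t → ∀ z : Eu n, z ≠ 0 → g (t • z) = t * g z := by
      intro t ht z hz
      show hK (t • z) ^ (1 - lam) * hL (t • z) ^ lam = t * (hK z ^ (1 - lam) * hL z ^ lam)
      rw [hKh t ht z, hLh t ht z, Real.mul_rpow ht.le (hKpos z hz).le,
        Real.mul_rpow ht.le (hLpos z hz).le]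
      have h1 : t ^ (1 - lam) * t ^ lam = t := by
        rw [← Real.rpow_add ht]; norm_num
      calc t ^ (1-lam) * hK z ^ (1-lam) * (t ^ lam * hL z ^ lam)
          = (t ^ (1-lam) * t ^ lam) * (hK z ^ (1-lam) * hL z ^ lam) := by ring
        _ = t * (hK z ^ (1-lam) * hL z ^ lam) := by rw [h1]
    have hGt : ∀ t : ℝ, 0 < t → ∀ u : Eu n, Gf (t • x) u = Gf x u := by
      intro t ht u
      have htx : t • x ≠ 0 := smul_ne_zero ht.ne' hx
      have hA : HasFDerivAt (fun z : Eu n => t • z)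
          (t • ContinuousLinearMap.id ℝ (Eu n)) x := (hasFDerivAt_id x).const_smul t
      have hB := (hgd (t • x) htx).comp x hA
      have heqz : (fun z : Eu n => g (t • z)) =ᶠ[𝓝 x] (fun z => t * g z) :=
        Filter.eventuallyEq_of_mem (hU.mem_nhds hxU) (fun z hz => hgt t ht z hz)
      have hB' : HasFDerivAt (fun z : Eu n => t * g z)
          ((Gf (t • x)).comp (t • ContinuousLinearMap.id ℝ (Eu n))) x :=
        hB.congr_of_eventuallyEq heqz.symm
      have hC : HasFDerivAt (fun z : Eu n => t * g z) (t • Gf x) x :=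
        (hgd x hx).const_mul t
      have huniq := hB'.unique hC
      have happ := congrArg (fun (L : Eu n →L[ℝ] ℝ) => L u) huniq
      simp only [ContinuousLinearMap.coe_comp', Function.comp_apply,
        ContinuousLinearMap.smul_apply, ContinuousLinearMap.id_apply] at happ
      rw [_root_.map_smul] at happ
      simp only [smul_eq_mul] at happ
      exact mul_left_cancel₀ ht.ne' happ
    have h1 : HasFDerivAt (fun y => Gf y w) (G'.flip w) x := by
      have h2 := hGd.clm_apply (hasFDerivAt_const w x)
      simpa using h2
    have h1' : HasFDerivAt (fun y => Gf y w) (G'.flip w) ((1:ℝ) • x) := by rwa [one_smul]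
    have h2 : HasDerivAt (fun u : ℝ => u • x) x (1:ℝ) := by
      simpa using (hasDerivAt_id (1:ℝ)).smul_const x
    have hcurve : HasDerivAt (fun u : ℝ => Gf (u • x) w) ((G'.flip w) x) 1 := by
      have h3 := h1'.comp_hasDerivAt 1 h2
      exact h3
    have hconst : (fun u : ℝ => Gf (u • x) w) =ᶠ[𝓝 (1:ℝ)] (fun _ => Gf x w) :=
      Filter.eventuallyEq_of_mem (Ioi_mem_nhds one_pos) (fun u hu => hGt u hu w)
    have hz : deriv (fun u : ℝ => Gf (u • x) w) 1 = 0 := by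
      rw [hconst.deriv_eq]; simp
    have hz2 := hcurve.deriv
    rw [hz] at hz2
    exact hz2.symm


set_option maxHeartbeats 1600000

/-- Let `f > 0` be continuous on `Sⁿ` and let `h_K, h_L` be positive C²
solutions of `h · det(∇²h + h Id) = f` with `∇²h + h Id > 0`. If for every `λ ∈ [0,1]`
the geometric mean `h_λ = h_K^{1-λ} h_L^λ` is also such a solution, then `h_K = h_L`. -/
theorem log_minkowski_interpolation_rigidity (n : ℕ) (hn : 1 ≤ n) (f hK hL : Eu n → ℝ)
    (hf0 : homog0 n f) (hfc : ContinuousOn f (Sph n)) (hfpos : ∀ x ∈ Sph n, 0 < f x)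
    (hKsol : IsLogSol n f hK) (hLsol : IsLogSol n f hL)
    (hinterp : ∀ lam ∈ Set.Icc (0:ℝ) 1,
      (∀ x ∈ Sph n, (Hmat n (fun y => hK y ^ (1 - lam) * hL y ^ lam) x).PosDef) ∧
      (∀ x ∈ Sph n, (hK x ^ (1 - lam) * hL x ^ lam) *
          detH n (fun y => hK y ^ (1 - lam) * hL y ^ lam) x = f x)) :
    Set.EqOn hK hL (Sph n) := by
  intro x hx
  classical
  have hx1 : ‖x‖ = 1 := by
    have hxx := hx
    simp only [Sph, mem_sphere_zero_iff_norm] at hxx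
    exact hxx
  have hxne : x ≠ 0 := by
    intro h0; rw [h0] at hx1; simp at hx1
  have hKpos : ∀ y : Eu n, y ≠ 0 → 0 < hK y := aux_pos n hK hKsol.1 hKsol.2.1
  have hLpos : ∀ y : Eu n, y ≠ 0 → 0 < hL y := aux_pos n hL hLsol.1 hLsol.2.1
  set v : Fin (n+1) → ℝ := fun i => x i with hvdef
  have hv1 : ∑ i, v i * v i = 1 := by
    have hne := EuclideanSpace.norm_eq x
    rw [hx1] at hne
    have hnn : 0 ≤ ∑ i, ‖x i‖^2 := Finset.sum_nonneg fun i _ => sq_nonneg _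
    have hsum : ∑ i, ‖x i‖^2 = 1 := by nlinarith [Real.sq_sqrt hnn]
    calc ∑ i, v i * v i = ∑ i, ‖x i‖^2 := Finset.sum_congr rfl fun i _ => by
          simp only [hvdef, Real.norm_eq_abs, sq_abs]; ring
      _ = 1 := hsum
  have hxsum : ∑ i, v i • (EuclideanSpace.single i 1 : Eu n) = x := by
    simp only [hvdef]
    simpa using (EuclideanSpace.basisFun (Fin (n+1)) ℝ).sum_repr x
  set a : Fin (n+1) → ℝ := fun i =>
    fderiv ℝ (fun z : Eu n => Real.log (hK z)) x (EuclideanSpace.single i 1) with hadef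
  set b : Fin (n+1) → ℝ := fun i =>
    fderiv ℝ (fun z : Eu n => Real.log (hL z)) x (EuclideanSpace.single i 1) with hbdef
  set A : Fin (n+1) → Fin (n+1) → ℝ := fun i j =>
    (fderiv ℝ (fderiv ℝ (fun z : Eu n => Real.log (hK z))) x (EuclideanSpace.single i 1))
      (EuclideanSpace.single j 1) with hAdef
  set B : Fin (n+1) → Fin (n+1) → ℝ := fun i j =>
    (fderiv ℝ (fderiv ℝ (fun z : Eu n => Real.log (hL z))) x (EuclideanSpace.single i 1))
      (EuclideanSpace.single j 1) with hBdef
  set MP : Matrix (Fin (n+1)) (Fin (n+1)) (Polynomial ℝ) := Matrix.of (fun i j =>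
    (1 - Polynomial.X) * Polynomial.C (A i j) + Polynomial.X * Polynomial.C (B i j)
    + ((1 - Polynomial.X) * Polynomial.C (a i) + Polynomial.X * Polynomial.C (b i))
      * ((1 - Polynomial.X) * Polynomial.C (a j) + Polynomial.X * Polynomial.C (b j))
    + Polynomial.C (v i * v j)) with hMPdef
  set lK := Real.log (hK x) with hlK
  set lL := Real.log (hL x) with hlL
  set tt := ((n:ℝ)+1) * (lL - lK) with htt
  have key : ∀ lam ∈ Set.Icc (0:ℝ) 1,
      Real.exp (tt * lam) *
        ((Polynomial.C (Real.exp (((n:ℝ)+1) * lK)) * MP.det).eval lam) = f x := by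
    intro lam hlam
    obtain ⟨hform, hsym, heuler⟩ := aux_hess n hK hL hKsol.1 hLsol.1 hKsol.2.2.1 hLsol.2.2.1
      hKpos hLpos x hxne lam
    set s := hK x ^ (1 - lam) * hL x ^ lam with hsdef
    have hs : 0 < s :=
      mul_pos (Real.rpow_pos_of_pos (hKpos x hxne) _) (Real.rpow_pos_of_pos (hLpos x hxne) _)
    set Mlam : Matrix (Fin (n+1)) (Fin (n+1)) ℝ := Matrix.of (fun i j =>
      (1 - lam) * A i j + lam * B i j
        + ((1 - lam) * a i + lam * b i) * ((1 - lam) * a j + lam * b j)) with hMdef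
    set R : Matrix (Fin (n+1)) (Fin (n+1)) ℝ := Matrix.of (fun i j => v i * v j) with hRdef
    have hentry : ∀ i j, D2 n (fun y => hK y ^ (1 - lam) * hL y ^ lam) x
        (EuclideanSpace.single i 1) (EuclideanSpace.single j 1) = s * Mlam i j := by
      intro i j
      simp only [D2]
      rw [hform (EuclideanSpace.single i 1) (EuclideanSpace.single j 1)]
      simp only [hMdef, Matrix.of_apply, hAdef, hBdef, hadef, hbdef, hsdef]
      try ring
    have hHmat : Hmat n (fun y => hK y ^ (1 - lam) * hL y ^ lam) x = s • Mlam + R := by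
      ext i j
      rw [Matrix.add_apply, Matrix.smul_apply, smul_eq_mul]
      show D2 n _ x _ _ + x i * x j = s * Mlam i j + R i j
      rw [hentry i j]
      simp only [hRdef, Matrix.of_apply, hvdef]
    have heuler' : ∀ j, ∑ i, v i * Mlam i j = 0 := by
      intro j
      have h0 := heuler (EuclideanSpace.single j 1)
      set L : Eu n →L[ℝ] ℝ := fderiv ℝ (fun y =>
          fderiv ℝ (fun z => hK z ^ (1 - lam) * hL z ^ lam) y (EuclideanSpace.single j 1)) x
        with hLdef
      have hlin : L x = ∑ i, v i * (s * Mlam i j) := by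
        rw [← hxsum, map_sum]
        refine Finset.sum_congr rfl fun i _ => ?_
        rw [_root_.map_smul, smul_eq_mul]
        congr 1
        exact hentry i j
      rw [hlin] at h0
      have hfac : s * ∑ i, v i * Mlam i j = 0 := by
        rw [Finset.mul_sum, ← h0]
        exact Finset.sum_congr rfl fun i _ => by ring
      exact (mul_eq_zero.mp hfac).resolve_left hs.ne'
    have hsymM : ∀ i j, Mlam i j = Mlam j i := by
      intro i j
      have e3 := hsym (EuclideanSpace.single i 1) (EuclideanSpace.single j 1)
      have e1 : s * Mlam i j = s * Mlam j i := by
        rw [← hentry i j, ← hentry j i]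
        simp only [D2]
        exact e3
      exact mul_left_cancel₀ hs.ne' e1
    have h2' : ∀ i, ∑ j, Mlam i j * v j = 0 := by
      intro i
      calc ∑ j, Mlam i j * v j = ∑ j, v j * Mlam j i := Finset.sum_congr rfl fun j _ => by
            rw [hsymM i j]; ring
        _ = 0 := heuler' i
    have hdetH : detH n (fun y => hK y ^ (1 - lam) * hL y ^ lam) x
        = s ^ n * (Mlam + R).det := by
      simp only [detH]
      rw [hHmat]
      exact aux_det_conj n v hv1 Mlam heuler' h2' hs
    have hMM : (Polynomial.evalRingHom lam).mapMatrix MP = Mlam + R := by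
      ext i j
      simp only [RingHom.mapMatrix_apply, Matrix.map_apply, hMPdef, Matrix.of_apply,
        Matrix.add_apply, hMdef, hRdef, Polynomial.eval_add,
        Polynomial.eval_mul, Polynomial.eval_sub, Polynomial.eval_one, Polynomial.eval_X,
        Polynomial.eval_C, Polynomial.coe_evalRingHom]
      try ring
    have hevalp : (Mlam + R).det = MP.det.eval lam := by
      have hmap := RingHom.map_det (Polynomial.evalRingHom lam) MP
      rw [hMM] at hmap
      simpa [Polynomial.coe_evalRingHom] using hmap.symm
    have heq := (hinterp lam hlam).2 x hx
    rw [hdetH, hevalp] at heq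
    have hsexp : s = Real.exp ((1 - lam) * lK + lam * lL) := by
      rw [hsdef, Real.rpow_def_of_pos (hKpos x hxne), Real.rpow_def_of_pos (hLpos x hxne),
        ← Real.exp_add, hlK, hlL]
      ring_nf
    have hpow : s * s ^ n = Real.exp (((n:ℝ)+1) * lK) * Real.exp (tt * lam) := by
      rw [← pow_succ' s n, hsexp, ← Real.exp_nat_mul, ← Real.exp_add]
      congr 1
      push_cast
      rw [htt]
      ring
    rw [Polynomial.eval_mul, Polynomial.eval_C]
    calc Real.exp (tt * lam) * (Real.exp (((n:ℝ)+1) * lK) * Polynomial.eval lam MP.det)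
        = (s * s ^ n) * Polynomial.eval lam MP.det := by rw [hpow]; ring
      _ = (hK x ^ (1 - lam) * hL x ^ lam) * (s ^ n * Polynomial.eval lam MP.det) := by
          rw [← hsdef]; ring
      _ = f x := heq
  have ht0 : tt = 0 :=
    aux_exp_poly_const _ tt (f x) (hfpos x hx) key
  have hn1 : ((n:ℝ)+1) ≠ 0 := by positivity
  have hllk : lL = lK := by
    rw [htt] at ht0
    rcases mul_eq_zero.mp ht0 with h' | h'
    · exact absurd h' hn1
    · linarith
  calc hK x = Real.exp lK := (Real.exp_log (hKpos x hxne)).symm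
    _ = Real.exp lL := by rw [hllk]
    _ = hL x := Real.exp_log (hLpos x hxne)
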